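/- arXiv:1710.09434 — 2 statements merged into one kernel-verified Lean document; each statement's English description precedes it below -/
import Mathlib

section
/- Key sub-claim in the multiplicativity reduction: let F be a set system on [n] with cd^{pq}(F) > (pq-1)(t-1), and let Γ = {E ⊆ [n] : cd^q(F|_E) > (q-1)(t-1)}. Then cd^p(Γ) > (p-1)(t-1). -/
open scoped Classical

/-- A proper `c`-coloring of the `r`-uniform generalized Kneser hypergraph of the
set system `F` of subsets of `Fin n`: no `r` pairwise disjoint members of `F`
receive the same color. -/
def kgColorable (n r c : ℕ) (F : Finset (Finset (Fin n))) : Prop :=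
  ∃ f : {σ : Finset (Fin n) // σ ∈ F} → Fin c,
    ∀ S : Finset {σ : Finset (Fin n) // σ ∈ F},
      S.card = r →
      ((S : Set {σ : Finset (Fin n) // σ ∈ F}).Pairwise fun a b => Disjoint a.1 b.1) →
      ¬ ∃ col : Fin c, ∀ a ∈ S, f a = col

/-- The chromatic number of the `r`-uniform Kneser hypergraph `KG^r(F)`. -/
noncomputable def kgChrom (n r : ℕ) (F : Finset (Finset (Fin n))) : ℕ :=
  sInf {c | kgColorable n r c F}

/-- The `r`-colorability defect of `F`:
`n` minus the maximal number of elements covered by pairwise disjoint sets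
`A_1, …, A_r ⊆ [n]` none of which contains a member of `F`. -/
noncomputable def colorDefect (n r : ℕ) (F : Finset (Finset (Fin n))) : ℕ :=
  n - sSup {m | ∃ A : Fin r → Finset (Fin n),
      (∀ i j, i ≠ j → Disjoint (A i) (A j)) ∧
      (∀ i, ∀ S ∈ F, ¬ S ⊆ A i) ∧
      m = ∑ i, (A i).card}

/-- A subset of `Fin n` is `s`-stable if any two of its elements are at cyclic
distance at least `s`. -/
def sStable (n s : ℕ) (σ : Finset (Fin n)) : Prop :=
  ∀ i ∈ σ, ∀ j ∈ σ, i ≠ j →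
    s ≤ min (Nat.dist i.val j.val) (n - Nat.dist i.val j.val)

/-- A subset of `Fin n` is 2-stable if it contains no two cyclically adjacent elements. -/
def twoStable (n : ℕ) (σ : Finset (Fin n)) : Prop :=
  ∀ i ∈ σ, ∀ j ∈ σ, i ≠ j →
    ¬ ((i.val + 1) % n = j.val ∨ (j.val + 1) % n = i.val)

/-- A subset of `Fin n` is almost 2-stable if it contains no two elements at linear
distance exactly one (it may contain both the first and the last element). -/
def almostTwoStable (n : ℕ) (σ : Finset (Fin n)) : Prop :=
  ∀ i ∈ σ, ∀ j ∈ σ, Nat.dist i.val j.val ≠ 1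

lemma aux_sum_card_le {n r : ℕ} (A : Fin r → Finset (Fin n))
    (h : ∀ i j, i ≠ j → Disjoint (A i) (A j)) : ∑ i, (A i).card ≤ n := by
  have h1 : ∑ i, (A i).card = (Finset.univ.biUnion A).card :=
    (Finset.card_biUnion (fun i _ j _ hij => h i j hij)).symm
  rw [h1]
  simpa using Finset.card_le_univ (Finset.univ.biUnion A)

lemma defect_witness {n r : ℕ} (G : Finset (Finset (Fin n))) (c : ℕ)
    (h : colorDefect n r G ≤ c) (hn : c < n) :
    ∃ A : Fin r → Finset (Fin n),
      (∀ i j, i ≠ j → Disjoint (A i) (A j)) ∧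
      (∀ i, ∀ S ∈ G, ¬ S ⊆ A i) ∧
      n ≤ (∑ i, (A i).card) + c := by
  set T : Set ℕ := {m | ∃ A : Fin r → Finset (Fin n),
      (∀ i j, i ≠ j → Disjoint (A i) (A j)) ∧
      (∀ i, ∀ S ∈ G, ¬ S ⊆ A i) ∧
      m = ∑ i, (A i).card} with hT
  have hcd : n - sSup T ≤ c := h
  have hbdd : BddAbove T := ⟨n, fun m hm => by
    obtain ⟨A, hA1, _, hA3⟩ := hm
    exact hA3 ▸ aux_sum_card_le A hA1⟩
  have hne : T.Nonempty := by
    by_contra hne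
    rw [Set.not_nonempty_iff_eq_empty] at hne
    rw [hne, csSup_empty] at hcd
    simp at hcd
    omega
  obtain ⟨A, hA1, hA2, hA3⟩ := Nat.sSup_mem hne hbdd
  exact ⟨A, hA1, hA2, by omega⟩

/-- if cd^{pq}(F) > (pq-1)(t-1) and
Γ = {E ⊆ [n] : cd^q(F|_E) > (q-1)(t-1)}, then cd^p(Γ) > (p-1)(t-1). -/
theorem colorDefect_gamma (n p q t : ℕ) (hp : 2 ≤ p) (hq : 2 ≤ q) (ht : 1 ≤ t)
    (F : Finset (Finset (Fin n)))
    (hcd : (p * q - 1) * (t - 1) < colorDefect n (p * q) F) :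
    (p - 1) * (t - 1) <
      colorDefect n p
        ((Finset.univ : Finset (Finset (Fin n))).filter
          (fun E => (q - 1) * (t - 1) <
            colorDefect n q (F.image (fun S => S ∩ E)))) := by
    classical
  by_contra hcon
  push_neg at hcon
  set d1 := (q - 1) * (t - 1) with hd1
  set d2 := (p - 1) * (t - 1) with hd2
  set d3 := (p * q - 1) * (t - 1) with hd3
  have hple : p ≤ p * q := Nat.le_mul_of_pos_right p (by omega)
  have hqle : q ≤ p * q := Nat.le_mul_of_pos_left q (by omega)
  have hn : d3 < n := lt_of_lt_of_le hcd (Nat.sub_le n _)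
  have hcp : d2 < n := lt_of_le_of_lt (Nat.mul_le_mul_right _ (by omega)) hn
  have hcq : d1 < n := lt_of_le_of_lt (Nat.mul_le_mul_right _ (by omega)) hn
  obtain ⟨A, hA1, hA2, hA3⟩ := defect_witness _ _ hcon hcp
  have hAi : ∀ i, colorDefect n q (F.image (fun S => S ∩ A i)) ≤ d1 := by
    intro i
    by_contra hlt
    push_neg at hlt
    exact hA2 i (A i)
      (Finset.mem_filter.mpr ⟨Finset.mem_univ _, hlt⟩) subset_rfl
  choose B hB1 hB2 hB3 using fun i => defect_witness _ _ (hAi i) hcq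
  -- per-i inequality
  have key : ∀ i, (A i).card ≤ (∑ j, (A i ∩ B i j).card) + d1 := by
    intro i
    set U := Finset.univ.biUnion (B i) with hU
    have hUeq : A i ∩ U = Finset.univ.biUnion (fun j => A i ∩ B i j) := by
      ext x
      simp only [hU, Finset.mem_inter, Finset.mem_biUnion, Finset.mem_univ, true_and]
      tauto
    have hsum : (A i ∩ U).card = ∑ j, (A i ∩ B i j).card := by
      rw [hUeq]
      exact Finset.card_biUnion (fun a _ b _ hab =>
        (hB1 i a b hab).mono Finset.inter_subset_right Finset.inter_subset_right)
    have hUcard : U.card = ∑ j, (B i j).card :=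
      Finset.card_biUnion (fun a _ b _ hab => hB1 i a b hab)
    have hsplit : (A i ∩ U).card + (A i \ U).card = (A i).card :=
      Finset.card_inter_add_card_sdiff (A i) U
    have hcompl : (A i \ U).card + U.card ≤ n := by
      have hdisj : Disjoint (A i \ U) U := Finset.sdiff_disjoint
      calc (A i \ U).card + U.card = ((A i \ U) ∪ U).card :=
            (Finset.card_union_of_disjoint hdisj).symm
        _ ≤ n := by simpa using Finset.card_le_univ ((A i \ U) ∪ U)
    have hBi := hB3 i
    omega
  have hsumA : ∑ i, (A i).card ≤ (∑ i, ∑ j, (A i ∩ B i j).card) + p * d1 := by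
    calc ∑ i, (A i).card ≤ ∑ i, ((∑ j, (A i ∩ B i j).card) + d1) :=
          Finset.sum_le_sum (fun i _ => key i)
      _ = (∑ i, ∑ j, (A i ∩ B i j).card) + p * d1 := by
          rw [Finset.sum_add_distrib]
          simp [Finset.sum_const, Finset.card_univ, mul_comm]
  have harith : p * d1 + d2 ≤ d3 := by
    obtain ⟨p', rfl⟩ : ∃ p', p = p' + 1 := ⟨p - 1, by omega⟩
    obtain ⟨q', rfl⟩ : ∃ q', q = q' + 1 := ⟨q - 1, by omega⟩
    rw [hd1, hd2, hd3]
    have h1 : (p' + 1) * (q' + 1) - 1 = p' * q' + p' + q' := by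
      have h2 : (p' + 1) * (q' + 1) = p' * q' + p' + q' + 1 := by ring
      rw [h2, Nat.add_sub_cancel]
    rw [h1]
    simp only [Nat.add_sub_cancel]
    exact le_of_eq (by ring)
  -- the combined family
  set Cp : Fin p × Fin q → Finset (Fin n) := fun x => A x.1 ∩ B x.1 x.2 with hCp
  have hCdisj : ∀ x y : Fin p × Fin q, x ≠ y → Disjoint (Cp x) (Cp y) := by
    rintro ⟨i, j⟩ ⟨i', j'⟩ hxy
    by_cases hii : i = i'
    · subst hii
      have hjj : j ≠ j' := fun h => hxy (by rw [h])
      exact (hB1 i j j' hjj).mono Finset.inter_subset_right Finset.inter_subset_right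
    · exact (hA1 i i' hii).mono Finset.inter_subset_left Finset.inter_subset_left
  have hCnot : ∀ x : Fin p × Fin q, ∀ S ∈ F, ¬ S ⊆ Cp x := by
    rintro ⟨i, j⟩ S hS hsub
    refine hB2 i j (S ∩ A i) (Finset.mem_image_of_mem _ hS) ?_
    exact Finset.inter_subset_left.trans
      (hsub.trans Finset.inter_subset_right)
  set Cfun : Fin (p * q) → Finset (Fin n) := fun k => Cp (finProdFinEquiv.symm k)
    with hCfun
  have hsumC : ∑ k, (Cfun k).card = ∑ i, ∑ j, (A i ∩ B i j).card := by
    rw [Fintype.sum_equiv finProdFinEquiv.symm (fun k => (Cfun k).card)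
      (fun x => (Cp x).card) (fun k => rfl)]
    rw [Fintype.sum_prod_type]
  set Tpq : Set ℕ := {m | ∃ A : Fin (p * q) → Finset (Fin n),
      (∀ i j, i ≠ j → Disjoint (A i) (A j)) ∧
      (∀ i, ∀ S ∈ F, ¬ S ⊆ A i) ∧
      m = ∑ i, (A i).card} with hTpq
  have hcd' : d3 < n - sSup Tpq := hcd
  have hbdd : BddAbove Tpq := ⟨n, fun m hm => by
    obtain ⟨A', hA1', _, hA3'⟩ := hm
    exact hA3' ▸ aux_sum_card_le A' hA1'⟩
  have hmem : (∑ k, (Cfun k).card) ∈ Tpq := by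
    refine ⟨Cfun, ?_, ?_, rfl⟩
    · intro k k' hkk'
      exact hCdisj _ _ (fun h => hkk' (finProdFinEquiv.symm.injective h))
    · intro k S hS
      exact hCnot _ S hS
  have hle : (∑ k, (Cfun k).card) ≤ sSup Tpq := le_csSup hbdd hmem
  omega
end

section
/- If a partition of [n] into blocks C_1,...,C_m of consecutive integers each of size r-1 is given (so (r-1) | n), then every k-subset σ ⊆ [n] with k = 2ℓ and |σ ∩ C_i| ≤ 1 for every i can be written as the union of two r-stable ℓ-subsets whose elements alternate. -/
open scoped Classical

theorem lt_succ_div_mul (a b : ℕ) (hb : 0 < b) : a < (a / b + 1) * b := by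
  calc a = b * (a / b) + a % b := (Nat.div_add_mod a b).symm
    _ < b * (a / b) + b := Nat.add_lt_add_left (Nat.mod_lt a hb) _
    _ = (a / b + 1) * b := by ring

/-- if n = m(r-1) is partitioned into m consecutive blocks of size r-1
and σ ⊆ [n] has 2ℓ elements with at most one element in each block, then σ is the
union of two r-stable ℓ-subsets whose elements alternate. -/
theorem transversal_splits_into_stable (r m ℓ n : ℕ) (hr : 2 ≤ r)
    (hn : n = m * (r - 1)) (σ : Finset (Fin n)) (hcard : σ.card = 2 * ℓ)
    (hblocks : ∀ j < m,
      (σ.filter (fun v : Fin n =>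
        j * (r - 1) ≤ v.val ∧ v.val < (j + 1) * (r - 1))).card ≤ 1) :
    ∃ τ₁ τ₂ : Finset (Fin n),
      σ = τ₁ ∪ τ₂ ∧ Disjoint τ₁ τ₂ ∧ τ₁.card = ℓ ∧ τ₂.card = ℓ ∧
      sStable n r τ₁ ∧ sStable n r τ₂ ∧
      (∀ a ∈ τ₁, ∀ b ∈ τ₁, a < b → ∃ x ∈ τ₂, a < x ∧ x < b) ∧
      (∀ a ∈ τ₂, ∀ b ∈ τ₂, a < b → ∃ x ∈ τ₁, a < x ∧ x < b) := by
  classical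
  set s := r - 1 with hsdef
  have hs1 : 1 ≤ s := by omega
  -- distinct elements of σ lie in distinct blocks
  have hdistinct : ∀ a ∈ σ, ∀ b ∈ σ, a ≠ b → a.val / s ≠ b.val / s := by
    intro a ha b hb hne heq
    set j := a.val / s with hj
    have hjm : j < m := by
      rw [hj, Nat.div_lt_iff_lt_mul hs1]
      calc a.val < n := a.isLt
        _ = m * s := hn
    have hmem : ∀ c : Fin n, c.val / s = j →
        c ∈ σ → c ∈ σ.filter (fun v : Fin n =>
          j * s ≤ v.val ∧ v.val < (j + 1) * s) := by
      intro c hc hcσ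
      refine Finset.mem_filter.mpr ⟨hcσ, ?_, ?_⟩
      · rw [← hc]; exact Nat.div_mul_le_self c.val s
      · rw [← hc]; exact lt_succ_div_mul c.val s hs1
    have h2 : 1 < (σ.filter (fun v : Fin n =>
        j * s ≤ v.val ∧ v.val < (j + 1) * s)).card :=
      Finset.one_lt_card.mpr ⟨a, hmem a rfl ha, b, hmem b heq.symm hb, hne⟩
    exact absurd (hblocks j hjm) (by omega)
  have hmono : ∀ a ∈ σ, ∀ b ∈ σ, a < b → a.val / s < b.val / s := by
    intro a ha b hb h
    exact lt_of_le_of_ne (Nat.div_le_div_right (le_of_lt h))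
      (hdistinct a ha b hb (ne_of_lt h))
  have hblt : ∀ c : Fin n, c.val / s < m := by
    intro c
    rw [Nat.div_lt_iff_lt_mul hs1]
    calc c.val < n := c.isLt
      _ = m * s := hn
  -- key distance estimate
  have hkey : ∀ a ∈ σ, ∀ b ∈ σ, a < b →
      (∃ x ∈ σ, a < x ∧ x < b) → (∃ y ∈ σ, b < y ∨ y < a) →
      r ≤ min (Nat.dist a.val b.val) (n - Nat.dist a.val b.val) := by
    intro a ha b hb hab ⟨x, hx, hax, hxb⟩ ⟨y, hy, hcase⟩
    obtain ⟨ja, hja⟩ : ∃ t, a.val / s = t := ⟨_, rfl⟩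
    obtain ⟨jb, hjb⟩ : ∃ t, b.val / s = t := ⟨_, rfl⟩
    obtain ⟨jx, hjx⟩ : ∃ t, x.val / s = t := ⟨_, rfl⟩
    obtain ⟨jy, hjy⟩ : ∃ t, y.val / s = t := ⟨_, rfl⟩
    have o1 : ja < jx := by rw [← hja, ← hjx]; exact hmono a ha x hx hax
    have o2 : jx < jb := by rw [← hjx, ← hjb]; exact hmono x hx b hb hxb
    have fa : a.val < (ja + 1) * s := by rw [← hja]; exact lt_succ_div_mul a.val s hs1
    have fb : jb * s ≤ b.val := by rw [← hjb]; exact Nat.div_mul_le_self b.val s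
    have fb' : b.val < (jb + 1) * s := by rw [← hjb]; exact lt_succ_div_mul b.val s hs1
    have fa' : ja * s ≤ a.val := by rw [← hja]; exact Nat.div_mul_le_self a.val s
    have hjbm : jb < m := by rw [← hjb]; exact hblt b
    have hA : a.val + r ≤ b.val := by
      calc a.val + r = (a.val + 1) + s := by omega
        _ ≤ (ja + 1) * s + s := Nat.add_le_add_right fa s
        _ = (ja + 2) * s := by ring
        _ ≤ jb * s := Nat.mul_le_mul_right s (by omega)
        _ ≤ b.val := fb
    have hB : b.val + r ≤ n + a.val := by
      rcases hcase with hby | hya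
      · have o3 : jb < jy := by rw [← hjb, ← hjy]; exact hmono b hb y hy hby
        have hjym : jy < m := by rw [← hjy]; exact hblt y
        calc b.val + r = (b.val + 1) + s := by omega
          _ ≤ (jb + 1) * s + s := Nat.add_le_add_right fb' s
          _ = (jb + 2) * s := by ring
          _ ≤ m * s := Nat.mul_le_mul_right s (by omega)
          _ = n := hn.symm
          _ ≤ n + a.val := Nat.le_add_right _ _
      · have o3 : jy < ja := by rw [← hjy, ← hja]; exact hmono y hy a ha hya
        have hsa : s ≤ a.val := by
          calc s = 1 * s := (one_mul s).symm
            _ ≤ ja * s := Nat.mul_le_mul_right s (by omega)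
            _ ≤ a.val := fa'
        calc b.val + r = (b.val + 1) + s := by omega
          _ ≤ (jb + 1) * s + s := Nat.add_le_add_right fb' s
          _ ≤ m * s + s := Nat.add_le_add_right (Nat.mul_le_mul_right s (by omega)) s
          _ = n + s := by rw [hn]
          _ ≤ n + a.val := Nat.add_le_add_left hsa n
    rw [Nat.dist_eq_sub_of_le (le_of_lt hab)]
    have hbn : b.val < n := b.isLt
    have hab' : a.val < b.val := hab
    exact le_min (by omega) (by omega)
  -- enumerate σ in increasing order
  obtain ⟨f, hfmono, hfmem, hfsurj⟩ :
      ∃ f : Fin (2 * ℓ) → Fin n, StrictMono f ∧ (∀ i, f i ∈ σ) ∧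
        ∀ v ∈ σ, ∃ i, f i = v := by
    refine ⟨fun i => (σ.orderIsoOfFin hcard i : Fin n), ?_, fun i => (σ.orderIsoOfFin hcard i).2, ?_⟩
    · intro i j h
      exact Subtype.coe_lt_coe.mpr ((σ.orderIsoOfFin hcard).strictMono h)
    · intro v hv
      exact ⟨(σ.orderIsoOfFin hcard).symm ⟨v, hv⟩, by simp⟩
  have hι₁ : ∀ i : Fin ℓ, 2 * i.val < 2 * ℓ := fun i => by omega
  have hι₂ : ∀ i : Fin ℓ, 2 * i.val + 1 < 2 * ℓ := fun i => by omega
  set g₁ : Fin ℓ → Fin n := fun i => f ⟨2 * i.val, hι₁ i⟩ with hg₁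
  set g₂ : Fin ℓ → Fin n := fun i => f ⟨2 * i.val + 1, hι₂ i⟩ with hg₂
  have hg₁inj : Function.Injective g₁ := by
    intro i j h
    have h2 := Fin.val_eq_of_eq (hfmono.injective h)
    simp only [] at h2
    exact Fin.ext (by omega)
  have hg₂inj : Function.Injective g₂ := by
    intro i j h
    have h2 := Fin.val_eq_of_eq (hfmono.injective h)
    simp only [] at h2
    exact Fin.ext (by omega)
  have hlt12 : ∀ i j : Fin ℓ, i.val ≤ j.val → g₁ i < g₂ j := by
    intro i j hij
    exact hfmono (Fin.mk_lt_mk.mpr (by omega))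
  have hlt21 : ∀ i j : Fin ℓ, i.val < j.val → g₂ i < g₁ j := by
    intro i j hij
    exact hfmono (Fin.mk_lt_mk.mpr (by omega))
  have hrefl1 : ∀ i j : Fin ℓ, g₁ i < g₁ j → i.val < j.val := by
    intro i j h
    have := Fin.mk_lt_mk.mp (hfmono.lt_iff_lt.mp h)
    omega
  have hrefl2 : ∀ i j : Fin ℓ, g₂ i < g₂ j → i.val < j.val := by
    intro i j h
    have := Fin.mk_lt_mk.mp (hfmono.lt_iff_lt.mp h)
    omega
  refine ⟨Finset.univ.image g₁, Finset.univ.image g₂, ?_, ?_, ?_, ?_, ?_, ?_, ?_, ?_⟩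
  · -- σ = τ₁ ∪ τ₂
    ext v
    simp only [Finset.mem_union, Finset.mem_image, Finset.mem_univ, true_and]
    constructor
    · intro hv
      obtain ⟨i, hi⟩ := hfsurj v hv
      rcases Nat.even_or_odd i.val with ⟨q, hq⟩ | ⟨q, hq⟩
      · refine Or.inl ⟨⟨q, by omega⟩, ?_⟩
        have he : (⟨2 * q, by omega⟩ : Fin (2 * ℓ)) = i :=
          Fin.ext (show 2 * q = i.val by omega)
        exact (congrArg f he).trans hi
      · refine Or.inr ⟨⟨q, by omega⟩, ?_⟩
        have he : (⟨2 * q + 1, by omega⟩ : Fin (2 * ℓ)) = i :=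
          Fin.ext (show 2 * q + 1 = i.val by omega)
        exact (congrArg f he).trans hi
    · rintro (⟨i, rfl⟩ | ⟨i, rfl⟩) <;> exact hfmem _
  · -- disjoint
    rw [Finset.disjoint_left]
    rintro v hv₁ hv₂
    obtain ⟨i, _, hi⟩ := Finset.mem_image.mp hv₁
    obtain ⟨j, _, hj⟩ := Finset.mem_image.mp hv₂
    have h2 := Fin.val_eq_of_eq (hfmono.injective (hi.trans hj.symm))
    simp only [] at h2
    omega
  · rw [Finset.card_image_of_injective _ hg₁inj, Finset.card_univ, Fintype.card_fin]
  · rw [Finset.card_image_of_injective _ hg₂inj, Finset.card_univ, Fintype.card_fin]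
  · -- sStable τ₁
    have main : ∀ i j : Fin ℓ, g₁ i < g₁ j →
        r ≤ min (Nat.dist (g₁ i).val (g₁ j).val)
          (n - Nat.dist (g₁ i).val (g₁ j).val) := by
      intro i j hlt
      have hij : i.val < j.val := hrefl1 i j hlt
      exact hkey _ (hfmem _) _ (hfmem _) hlt
        ⟨g₂ i, hfmem _, hlt12 i i le_rfl, hlt21 i j hij⟩
        ⟨g₂ j, hfmem _, Or.inl (hlt12 j j le_rfl)⟩
    intro u hu v hv hne
    obtain ⟨i, _, rfl⟩ := Finset.mem_image.mp hu
    obtain ⟨j, _, rfl⟩ := Finset.mem_image.mp hv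
    rcases lt_or_gt_of_ne hne with h | h
    · exact main i j h
    · have := main j i h
      rwa [Nat.dist_comm] at this
  · -- sStable τ₂
    have main : ∀ i j : Fin ℓ, g₂ i < g₂ j →
        r ≤ min (Nat.dist (g₂ i).val (g₂ j).val)
          (n - Nat.dist (g₂ i).val (g₂ j).val) := by
      intro i j hlt
      have hij : i.val < j.val := hrefl2 i j hlt
      exact hkey _ (hfmem _) _ (hfmem _) hlt
        ⟨g₁ j, hfmem _, hlt21 i j hij, hlt12 j j le_rfl⟩
        ⟨g₁ i, hfmem _, Or.inr (hlt12 i i le_rfl)⟩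
    intro u hu v hv hne
    obtain ⟨i, _, rfl⟩ := Finset.mem_image.mp hu
    obtain ⟨j, _, rfl⟩ := Finset.mem_image.mp hv
    rcases lt_or_gt_of_ne hne with h | h
    · exact main i j h
    · have := main j i h
      rwa [Nat.dist_comm] at this
  · -- alternation 1
    intro a ha b hb hab
    obtain ⟨i, _, rfl⟩ := Finset.mem_image.mp ha
    obtain ⟨j, _, rfl⟩ := Finset.mem_image.mp hb
    have hij : i.val < j.val := hrefl1 i j hab
    exact ⟨g₂ i, Finset.mem_image.mpr ⟨i, Finset.mem_univ i, rfl⟩,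
      hlt12 i i le_rfl, hlt21 i j hij⟩
  · -- alternation 2
    intro a ha b hb hab
    obtain ⟨i, _, rfl⟩ := Finset.mem_image.mp ha
    obtain ⟨j, _, rfl⟩ := Finset.mem_image.mp hb
    have hij : i.val < j.val := hrefl2 i j hab
    exact ⟨g₁ j, Finset.mem_image.mpr ⟨j, Finset.mem_univ j, rfl⟩,
      hlt21 i j hij, hlt12 j j le_rfl⟩
end
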